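/- arXiv:1706.05827 — 3 statements merged into one kernel-verified Lean document; each statement's English description precedes it below -/
import Mathlib

section
/- Let X be a subset of Q^M. Then X is a subshift if and only if X is shift-invariant (h ⊛ X = X for every h ∈ H, where h ⊛ X = {h ⊛ x : x ∈ X}) and compact in the prodiscrete topology on Q^M. -/
open Filter Set

namespace GoE

variable {G M Q : Type*}

/-- A left homogeneous space `⟨M, G, ▷⟩` together with a coordinate system
`⟨m₀, (g_{m₀,m})_{m∈M}⟩`: a cell space with finite stabiliser `G₀` of `m₀`. -/
structure CellSpace (G M : Type*) [Group G] where
  act : G → M → M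
  one_act : ∀ m : M, act 1 m = m
  mul_act : ∀ (g h : G) (m : M), act (g * h) m = act g (act h m)
  transitive : ∀ m m' : M, ∃ g : G, act g m = m'
  m0 : M
  coord : M → G
  coord_act : ∀ m : M, act (coord m) m0 = m
  stab_finite : {g : G | act g m0 = m0}.Finite

variable [Group G]

namespace CellSpace

/-- Membership in the stabiliser `G₀` of `m₀`. -/
def stab (R : CellSpace G M) (g : G) : Prop := R.act g R.m0 = R.m0

/-- The induced right semi-action `m ↝ gG₀ = g_{m₀,m} g ▷ m₀`, on representatives. -/
def sAct (R : CellSpace G M) (m : M) (g : G) : M := R.act (R.coord m * g) R.m0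

/-- `m ↝ ι n` where `ι : M → G/G₀`, `n ↦ G_{m₀,n}` is the canonical identification. -/
def nAct (R : CellSpace G M) (m n : M) : M := R.act (R.coord m * R.coord n) R.m0

/-- `S ⊆ G` represents a finite symmetric right generating set of cosets
(`G₀ · S ⊆ S`, `S⁻¹ ⊆ S`, and `S` generates). -/
structure IsRightGenSet (R : CellSpace G M) (S : Set G) : Prop where
  finite : S.Finite
  saturated : ∀ s ∈ S, ∀ g₀ : G, R.stab g₀ → s * g₀ ∈ S
  stab_mul : ∀ g₀ : G, R.stab g₀ → ∀ s ∈ S, g₀ * s ∈ S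
  symm : ∀ s ∈ S, s⁻¹ ∈ S
  generates : ∀ m : M, ∃ (k : ℕ) (f : ℕ → M), f 0 = R.m0 ∧ f k = m ∧
    ∀ i < k, ∃ s ∈ S, f (i + 1) = R.sAct (f i) s

/-- There is an `S`-path of length `n` from `m` to `m'` in the `S`-Cayley graph. -/
def Chain (R : CellSpace G M) (S : Set G) (m m' : M) (n : ℕ) : Prop :=
  ∃ f : ℕ → M, f 0 = m ∧ f n = m' ∧ ∀ i < n, ∃ s ∈ S, f (i + 1) = R.sAct (f i) s

/-- The `S`-metric `d`. -/
noncomputable def dist (R : CellSpace G M) (S : Set G) (m m' : M) : ℕ :=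
  sInf {n : ℕ | R.Chain S m m' n}

/-- The ball `B(m, ρ)` of radius `ρ` centred at `m`. -/
noncomputable def ball (R : CellSpace G M) (S : Set G) (m : M) (ρ : ℕ) : Set M :=
  {m' : M | R.dist S m m' ≤ ρ}

/-- The `θ`-interior `A^{-θ}` of `A`. -/
noncomputable def inter (R : CellSpace G M) (S : Set G) (A : Set M) (θ : ℕ) : Set M :=
  {m ∈ A | R.ball S m θ ⊆ A}

/-- The `θ`-closure `A^{+θ}` of `A`. -/
noncomputable def clos (R : CellSpace G M) (S : Set G) (A : Set M) (θ : ℕ) : Set M :=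
  {m : M | (R.ball S m θ ∩ A).Nonempty}

/-- The external `θ`-boundary `∂θ⁺A = A^{+θ} ∖ A`. -/
noncomputable def extB (R : CellSpace G M) (S : Set G) (A : Set M) (θ : ℕ) : Set M :=
  R.clos S A θ \ A

/-- The internal `θ`-boundary `∂θ⁻A = A ∖ A^{-θ}`. -/
noncomputable def intB (R : CellSpace G M) (S : Set G) (A : Set M) (θ : ℕ) : Set M :=
  A \ R.inter S A θ

/-- The `θ`-boundary `∂θA = A^{+θ} ∖ A^{-θ}`. -/
noncomputable def bdry (R : CellSpace G M) (S : Set G) (A : Set M) (θ : ℕ) : Set M :=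
  R.clos S A θ \ R.inter S A θ

end CellSpace

/-- The set `X_A` of restrictions to `A` of the elements of `X`. -/
def restr (A : Set M) (X : Set (M → Q)) : Set (A → Q) :=
  (fun x : M → Q => A.restrict x) '' X

/-- The pattern `p` (with domain `A`) semi-occurs in the configuration `c`:
there is `h ∈ H` with `h ⊛ p = c↾_{h ▷ dom p}`. -/
def SemiOccurs (R : CellSpace G M) (H : Subgroup G) {A : Set M} (p : A → Q)
    (c : M → Q) : Prop :=
  ∃ h ∈ H, ∀ a : A, c (R.act h ↑a) = p a

/-- The pattern `p` (with domain `A`) occurs at `t` in the configuration `c`: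
`t ⊛' p = c↾_{t ↝ A}`. -/
def OccursAt (R : CellSpace G M) {A : Set M} (p : A → Q) (t : M) (c : M → Q) : Prop :=
  ∀ a : A, c (R.nAct t ↑a) = p a

/-- The pattern `p` is allowed in `X`: it semi-occurs in some point of `X`. -/
def Allowed (R : CellSpace G M) (H : Subgroup G) (X : Set (M → Q)) {A : Set M}
    (p : A → Q) : Prop :=
  ∃ x ∈ X, SemiOccurs R H p x

/-- The set `⟨𝔉⟩` generated by a set `𝔉` of forbidden patterns. -/
def Generated (R : CellSpace G M) (H : Subgroup G) (𝔉 : Set (Σ A : Set M, A → Q)) :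
    Set (M → Q) :=
  {c : M → Q | ∀ f ∈ 𝔉, ¬ SemiOccurs R H f.2 c}

/-- `X` is a subshift of `Q^M`: it is generated by a set of blocks. -/
def IsSubshift (R : CellSpace G M) (H : Subgroup G) (X : Set (M → Q)) : Prop :=
  ∃ 𝔉 : Set (Σ A : Set M, A → Q), (∀ f ∈ 𝔉, f.1.Finite) ∧ X = Generated R H 𝔉

/-- `X` is a subshift of finite type: it is generated by a finite set of blocks. -/
def IsSubshiftFT (R : CellSpace G M) (H : Subgroup G) (X : Set (M → Q)) : Prop :=
  ∃ 𝔉 : Set (Σ A : Set M, A → Q), 𝔉.Finite ∧ (∀ f ∈ 𝔉, f.1.Finite) ∧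
    X = Generated R H 𝔉

/-- `X` is a `κ`-step subshift: it is generated by a set of `B(κ)`-blocks. -/
def IsStep (R : CellSpace G M) (S : Set G) (H : Subgroup G) (X : Set (M → Q))
    (κ : ℕ) : Prop :=
  ∃ 𝔉 : Set (Σ A : Set M, A → Q), (∀ f ∈ 𝔉, f.1 = R.ball S R.m0 κ) ∧
    X = Generated R H 𝔉

/-- `X` is `κ`-strongly irreducible. -/
def IsStronglyIrr (R : CellSpace G M) (S : Set G) (H : Subgroup G)
    (X : Set (M → Q)) (κ : ℕ) : Prop :=
  ∀ (A B : Set M), A.Finite → B.Finite → ∀ (p : A → Q) (p' : B → Q),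
    Allowed R H X p → Allowed R H X p' →
    (∀ a ∈ A, ∀ b ∈ B, κ + 1 ≤ R.dist S a b) →
    ∃ x ∈ X, A.restrict x = p ∧ B.restrict x = p'

/-- `X` has `ρ`-bounded propagation. -/
def HasBoundedProp (R : CellSpace G M) (S : Set G) (X : Set (M → Q)) (ρ : ℕ) : Prop :=
  ∀ F : Set M, F.Finite → ∀ p : F → Q,
    (∀ f ∈ F, ∃ x ∈ X, ∀ (m : M) (hm : m ∈ R.ball S f ρ ∩ F), p ⟨m, hm.2⟩ = x m) →
    ∃ x ∈ X, F.restrict x = p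

/-- `Δ` is a `κ`-local map from `X` to `Y`. -/
def IsLocalMap (R : CellSpace G M) (S : Set G) (H : Subgroup G)
    (X Y : Set (M → Q)) (Δ : (M → Q) → (M → Q)) (κ : ℕ) : Prop :=
  Set.MapsTo Δ X Y ∧
  ∃ N : Set M, N ⊆ R.ball S R.m0 κ ∧
    (∀ g₀ : G, R.stab g₀ → ∀ n ∈ N, R.act g₀ n ∈ N) ∧
    ∃ δ : (N → Q) → Q,
      (∀ h₀ ∈ H, R.stab h₀ →
        ∀ ℓ ∈ restr N X, ∀ ℓ' : N → Q,
          (∀ (n : M) (hn : n ∈ N) (hn' : R.act h₀⁻¹ n ∈ N),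
            ℓ' ⟨n, hn⟩ = ℓ ⟨R.act h₀⁻¹ n, hn'⟩) →
          δ ℓ' = δ ℓ) ∧
      ∀ x ∈ X, ∀ m : M, Δ x m = δ (fun n : N => x (R.nAct m ↑n))

/-- `Δ` is pre-injective on `X`. -/
def PreInjective (X : Set (M → Q)) (Δ : (M → Q) → (M → Q)) : Prop :=
  ∀ x ∈ X, ∀ x' ∈ X, Δ x = Δ x' → {m : M | x m ≠ x' m}.Finite → x = x'

/-- The cell space `R` is right amenable: there is a finitely additive probability
measure on the power set of `M` that is semi-invariant under the right semi-action. -/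
def RightAmenable (R : CellSpace G M) : Prop :=
  ∃ μ : Set M → ℝ, (∀ A : Set M, 0 ≤ μ A) ∧ μ Set.univ = 1 ∧
    (∀ A B : Set M, Disjoint A B → μ (A ∪ B) = μ A + μ B) ∧
    ∀ (g : G) (A : Set M), Set.InjOn (fun m => R.sAct m g) A →
      μ ((fun m => R.sAct m g) '' A) = μ A

/-- `F` is a right Følner net in `R` (indexed by the directed set `I`). -/
def IsFolnerNet (R : CellSpace G M) (S : Set G) {I : Type*} [Preorder I]
    (F : I → Set M) : Prop :=
  (∀ i, (F i).Nonempty) ∧ (∀ i, (F i).Finite) ∧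
  ∀ ρ : ℕ, Tendsto (fun i => ((R.bdry S (F i) ρ).ncard : ℝ) / ((F i).ncard : ℝ))
    atTop (nhds 0)

/-- The entropy of `X ⊆ Q^M` with respect to the net `F`:
`limsup_i log|X_{F_i}| / |F_i|`. -/
noncomputable def entropy (R : CellSpace G M) (S : Set G) {I : Type*} [Preorder I]
    (F : I → Set M) (X : Set (M → Q)) : ℝ :=
  limsup (fun i => Real.log ((restr (F i) X).ncard : ℝ) / ((F i).ncard : ℝ)) atTop

/-- `T` is a `⟨θ, κ, θ'⟩`-tiling of `R`. -/
def IsTiling (R : CellSpace G M) (S : Set G) (θ κ θ' : ℕ) (T : Set M) : Prop :=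
  (∀ t ∈ T, ∀ t' ∈ T, t ≠ t' →
    ∀ a ∈ R.ball S t θ, ∀ b ∈ R.ball S t' θ, κ + 1 ≤ R.dist S a b) ∧
  ∀ m : M, ∃ t ∈ T, m ∈ R.ball S t θ'

/-- The action `h ⊛ c` of `h ∈ G` on configurations: `(h ⊛ c)(m) = c(h⁻¹ ▷ m)`. -/
def shiftAct (R : CellSpace G M) (h : G) (c : M → Q) : M → Q :=
  fun m => c (R.act h⁻¹ m)

lemma semiOccurs_shiftAct (R : CellSpace G M) (H : Subgroup G) {A : Set M}
    (p : A → Q) (c : M → Q) {h : G} (hh : h ∈ H) :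
    SemiOccurs R H p (shiftAct R h c) ↔ SemiOccurs R H p c := by
  constructor
  · rintro ⟨h', hh', he⟩
    refine ⟨h⁻¹ * h', mul_mem (inv_mem hh) hh', fun a => ?_⟩
    have := he a
    simpa [shiftAct, R.mul_act] using this
  · rintro ⟨g, hg, he⟩
    refine ⟨h * g, mul_mem hh hg, fun a => ?_⟩
    have := he a
    simp only [shiftAct, ← R.mul_act]
    simpa using this

lemma shiftAct_shiftAct (R : CellSpace G M) (g h : G) (c : M → Q) :
    shiftAct R g (shiftAct R h c) = shiftAct R (g * h) c := by
  funext m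
  simp [shiftAct, mul_inv_rev, R.mul_act]

lemma shiftAct_one (R : CellSpace G M) (c : M → Q) : shiftAct R 1 c = c := by
  funext m; simp [shiftAct, R.one_act]

lemma isOpen_semiOccurs [TopologicalSpace Q] [DiscreteTopology Q]
    (R : CellSpace G M) (H : Subgroup G) {A : Set M} (hA : A.Finite) (p : A → Q) :
    IsOpen {c : M → Q | SemiOccurs R H p c} := by
  have : {c : M → Q | SemiOccurs R H p c}
      = ⋃ h ∈ (H : Set G), ⋂ a : A, (fun c : M → Q => c (R.act h ↑a)) ⁻¹' {p a} := by
    ext c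
    simp [SemiOccurs, Set.mem_iUnion, Set.mem_iInter, eq_comm]
  rw [this]
  refine isOpen_biUnion fun h _ => ?_
  haveI := hA.to_subtype
  exact isOpen_iInter_of_finite fun a =>
    (continuous_apply _).isOpen_preimage _ (isOpen_discrete _)

theorem stmt1
    [Finite Q] [TopologicalSpace Q] [DiscreteTopology Q]
    (R : CellSpace G M) (S : Set G) (hS : R.IsRightGenSet S)
    (H : Subgroup G) (hH : ∀ m : M, R.coord m ∈ H)
    (X : Set (M → Q)) :
    IsSubshift R H X ↔ ((∀ h ∈ H, shiftAct R h '' X = X) ∧ IsCompact X) := by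
  constructor
  · rintro ⟨𝔉, hfin, rfl⟩
    constructor
    · -- invariance
      intro h hh
      ext c
      constructor
      · rintro ⟨x, hx, rfl⟩
        intro f hf hocc
        exact hx f hf ((semiOccurs_shiftAct R H f.2 x hh).1 hocc)
      · intro hc
        refine ⟨shiftAct R h⁻¹ c, ?_, ?_⟩
        · intro f hf hocc
          exact hc f hf ((semiOccurs_shiftAct R H f.2 c (inv_mem hh)).1 hocc)
        · rw [shiftAct_shiftAct, mul_inv_cancel, shiftAct_one]
    · -- compactness
      have hclosed : IsClosed (Generated R H 𝔉) := by
        have : Generated R H 𝔉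
            = ⋂ f ∈ 𝔉, {c : M → Q | SemiOccurs R H (Sigma.snd f) c}ᶜ := by
          ext c; simp [Generated]
        rw [this]
        exact isClosed_biInter fun f hf =>
          (isOpen_semiOccurs R H (hfin f hf) f.2).isClosed_compl
      exact hclosed.isCompact
  · rintro ⟨hinv, hcomp⟩
    refine ⟨{f : Σ A : Set M, A → Q | f.1.Finite ∧ ∀ x ∈ X, ¬ SemiOccurs R H f.2 x},
      fun f hf => hf.1, ?_⟩
    apply Set.Subset.antisymm
    · intro x hx f hf hocc
      exact hf.2 x hx hocc
    · intro c hc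
      -- c agrees with some point of X on every finite set
      have key : ∀ A : Set M, A.Finite → ∃ y ∈ X, ∀ a ∈ A, y a = c a := by
        intro A hA
        by_contra hcon
        push_neg at hcon
        have hmem : (⟨A, A.restrict c⟩ : Σ A : Set M, A → Q) ∈
            {f : Σ A : Set M, A → Q | f.1.Finite ∧ ∀ x ∈ X, ¬ SemiOccurs R H f.2 x} := by
          refine ⟨hA, fun x hx hocc => ?_⟩
          obtain ⟨h, hh, he⟩ := hocc
          have hy : shiftAct R h⁻¹ x ∈ X := by
            rw [← hinv h⁻¹ (inv_mem hh)]
            exact ⟨x, hx, rfl⟩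
          obtain ⟨a, ha, hne⟩ := hcon _ hy
          apply hne
          have := he ⟨a, ha⟩
          simpa [shiftAct, Set.restrict] using this
        have := hc _ hmem
        exact this ⟨1, one_mem H, fun a => by simp [R.one_act, Set.restrict]⟩
      -- hence c ∈ closure X = X
      have hXclosed : IsClosed X := hcomp.isClosed
      by_contra hcX
      obtain ⟨I, u, hu, hsub⟩ := isOpen_pi_iff.1 hXclosed.isOpen_compl c hcX
      obtain ⟨y, hy, hagree⟩ := key (I : Set M) I.finite_toSet
      have : y ∈ (I : Set M).pi u := fun i hi => by
        rw [hagree i hi]; exact (hu i hi).2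
      exact hsub this hy

end GoE
end

section
/- Let X be a subshift of Q^M and let κ be a non-negative integer. Then X is κ-step if and only if for every c ∈ Q^M, if c↾_{B(m,κ)} ∈ X_{B(m,κ)} for every m ∈ M, then c ∈ X. -/
open Filter Set

namespace GoE

variable {G M Q : Type*}

variable [Group G]

/-! A subshift is `H`-invariant, and the translate `g_{m₀,m} ▷ B(κ)` of the ball is `B(m, κ)`.
Hence a configuration `c` avoids every `B(κ)`-block outside `X_{B(κ)}` exactly when every
`c↾_{B(m,κ)}` lies in `X_{B(m,κ)}`; and a `κ`-step subshift `⟨𝔉⟩` is generated by these blocks,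
since no block of `𝔉` lies in `⟨𝔉⟩_{B(κ)}`. -/

namespace CellSpace

variable (R : CellSpace G M) {S : Set G}

lemma act_inv_act (g : G) (m : M) : R.act g⁻¹ (R.act g m) = m := by
  rw [← R.mul_act, inv_mul_cancel, R.one_act]

lemma act_act_inv (g : G) (m : M) : R.act g (R.act g⁻¹ m) = m := by
  simpa using R.act_inv_act g⁻¹ m

lemma exists_stab_act_sAct (g : G) (m : M) (s : G) :
    ∃ g₀, R.stab g₀ ∧ R.act g (R.sAct m s) = R.sAct (R.act g m) (g₀ * s) := by
  refine ⟨(R.coord (R.act g m))⁻¹ * (g * R.coord m), ?_, ?_⟩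
  · show R.act _ R.m0 = R.m0
    rw [R.mul_act, R.mul_act, R.coord_act]
    nth_rewrite 2 [← R.coord_act (R.act g m)]
    exact R.act_inv_act _ _
  · show R.act g (R.act (R.coord m * s) R.m0) = R.act (R.coord (R.act g m) * _) R.m0
    rw [← R.mul_act]
    group

variable {R}

lemma Chain.act (hS : R.IsRightGenSet S) (g : G) {m m' : M} {n : ℕ}
    (h : R.Chain S m m' n) : R.Chain S (R.act g m) (R.act g m') n := by
  obtain ⟨f, rfl, rfl, hstep⟩ := h
  refine ⟨fun i => R.act g (f i), rfl, rfl, fun i hi => ?_⟩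
  obtain ⟨s, hs, hfs⟩ := hstep i hi
  obtain ⟨g₀, hg₀, hg⟩ := R.exists_stab_act_sAct g (f i) s
  exact ⟨g₀ * s, hS.stab_mul g₀ hg₀ s hs, (congrArg (R.act g) hfs).trans hg⟩

lemma dist_act (hS : R.IsRightGenSet S) (g : G) (m m' : M) :
    R.dist S (R.act g m) (R.act g m') = R.dist S m m' := by
  refine congrArg sInf (Set.ext fun n => ⟨fun h => ?_, Chain.act hS g⟩)
  simpa only [Set.mem_ofPred_eq, R.act_inv_act] using Chain.act hS g⁻¹ h

lemma ball_act (hS : R.IsRightGenSet S) (g : G) (m : M) (ρ : ℕ) :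
    R.ball S (R.act g m) ρ = R.act g '' R.ball S m ρ := by
  ext m'
  refine ⟨fun h => ⟨R.act g⁻¹ m', ?_, R.act_act_inv g m'⟩, ?_⟩
  · rw [CellSpace.ball, Set.mem_ofPred_eq, ← dist_act hS g, R.act_act_inv]
    exact h
  · rintro ⟨a, ha, rfl⟩
    rw [CellSpace.ball, Set.mem_ofPred_eq, dist_act hS]
    exact ha

end CellSpace

def IsShiftInvariant (R : CellSpace G M) (H : Subgroup G) (X : Set (M → Q)) : Prop :=
  ∀ h ∈ H, ∀ x ∈ X, shiftAct R h x ∈ X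

section Patterns

variable {R : CellSpace G M} {H : Subgroup G} {X : Set (M → Q)}

lemma generated_isShiftInvariant (𝔉 : Set (Σ A : Set M, A → Q)) :
    IsShiftInvariant R H (Generated R H 𝔉) := by
  rintro h hh c hc f hf ⟨h', hh', hocc⟩
  refine hc f hf ⟨h⁻¹ * h', mul_mem (inv_mem hh) hh', fun a => ?_⟩
  rw [R.mul_act]
  exact hocc a

lemma IsSubshift.isShiftInvariant (hX : IsSubshift R H X) : IsShiftInvariant R H X := by
  obtain ⟨𝔉, -, rfl⟩ := hX
  exact generated_isShiftInvariant 𝔉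

/-- The pattern `a ↦ c (h ▷ a)` on `A` is `h⁻¹ ⊛ (c↾_{h ▷ A})`. -/
lemma pullback_mem_restr_iff (hX : IsShiftInvariant R H X) {h : G} (hh : h ∈ H)
    (A : Set M) (c : M → Q) :
    (fun a : A => c (R.act h a)) ∈ restr A X ↔
      (R.act h '' A).restrict c ∈ restr (R.act h '' A) X := by
  constructor
  · rintro ⟨x, hx, hxc⟩
    refine ⟨shiftAct R h x, hX h hh x hx, funext fun ⟨_, a, ha, rfl⟩ => ?_⟩
    show x (R.act h⁻¹ (R.act h a)) = c (R.act h a)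
    rw [R.act_inv_act]
    exact congrFun hxc ⟨a, ha⟩
  · rintro ⟨x, hx, hxc⟩
    refine ⟨shiftAct R h⁻¹ x, hX _ (inv_mem hh) x hx, funext fun a => ?_⟩
    show x (R.act h⁻¹⁻¹ a) = c (R.act h a)
    rw [inv_inv]
    exact congrFun hxc ⟨_, a, a.2, rfl⟩

lemma snd_notMem_restr_generated {𝔉 : Set (Σ A : Set M, A → Q)} {f : Σ A : Set M, A → Q}
    (hf : f ∈ 𝔉) : f.2 ∉ restr f.1 (Generated R H 𝔉) := by
  rintro ⟨x, hx, hxf⟩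
  exact hx f hf ⟨1, H.one_mem, fun a => by rw [R.one_act, ← hxf]; rfl⟩

def forbiddenPatterns (A : Set M) (X : Set (M → Q)) : Set (Σ A : Set M, A → Q) :=
  Sigma.mk A '' (restr A X)ᶜ

lemma subset_generated_forbiddenPatterns (hX : IsShiftInvariant R H X) (A : Set M) :
    X ⊆ Generated R H (forbiddenPatterns A X) := by
  rintro x hx _ ⟨p, hp, rfl⟩ ⟨h, hh, hocc⟩
  refine hp ?_
  rw [show p = _ from (funext hocc).symm, pullback_mem_restr_iff hX hh]
  exact Set.mem_image_of_mem _ hx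

lemma pullback_mem_restr_of_mem_generated {A : Set M} {c : M → Q}
    (hc : c ∈ Generated R H (forbiddenPatterns A X)) {h : G} (hh : h ∈ H) :
    (fun a : A => c (R.act h a)) ∈ restr A X := by
  by_contra hp
  exact hc _ ⟨_, hp, rfl⟩ ⟨h, hh, fun _ => rfl⟩

end Patterns

theorem stmt3_general
    (R : CellSpace G M) (S : Set G) (hS : R.IsRightGenSet S)
    (H : Subgroup G) (hH : ∀ m : M, R.coord m ∈ H)
    (X : Set (M → Q)) (hX : IsSubshift R H X) (κ : ℕ) :
    IsStep R S H X κ ↔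
      ∀ c : M → Q,
        (∀ m : M, Set.restrict (R.ball S m κ) c ∈ restr (R.ball S m κ) X) →
        c ∈ X := by
  have hinv := hX.isShiftInvariant
  constructor
  · rintro ⟨𝔉, hdom, rfl⟩ c hc f hf ⟨h, hh, hocc⟩
    have hlocal := hc (R.act h R.m0)
    rw [R.ball_act hS, ← pullback_mem_restr_iff hinv hh, ← hdom f hf] at hlocal
    exact snd_notMem_restr_generated hf (funext hocc ▸ hlocal)
  · intro hloc
    refine ⟨forbiddenPatterns (R.ball S R.m0 κ) X, by rintro _ ⟨_, -, rfl⟩; rfl,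
      (subset_generated_forbiddenPatterns hinv _).antisymm fun c hc => hloc c fun m => ?_⟩
    rw [← R.coord_act m, R.ball_act hS, ← pullback_mem_restr_iff hinv (hH m)]
    exact pullback_mem_restr_of_mem_generated hc (hH m)

theorem stmt3
    [Finite Q] (R : CellSpace G M) (S : Set G) (hS : R.IsRightGenSet S)
    (H : Subgroup G) (hH : ∀ m : M, R.coord m ∈ H)
    (X : Set (M → Q)) (hX : IsSubshift R H X) (κ : ℕ) :
    IsStep R S H X κ ↔
      ∀ c : M → Q,
        (∀ m : M, Set.restrict (R.ball S m κ) c ∈ restr (R.ball S m κ) X) →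
        c ∈ X :=
  stmt3_general R S hS H hH X hX κ

end GoE
end

section
/- Let X be a κ-step subshift of Q^M, let x ∈ X, let (A_i)_{i∈I} be a family of subsets of M such that the family (A_i^{+2κ})_{i∈I} is pairwise disjoint, and let (x_i)_{i∈I} be a family of points of X such that x_i↾_{∂_{2κ}⁺A_i} = x↾_{∂_{2κ}⁺A_i} for each i ∈ I. Then the point of Q^M that agrees with x on M ∖ ⋃_{i∈I} A_i and with x_i on A_i for each i ∈ I is identical to the point that agrees with x on M ∖ ⋃_{i∈I} A_i^{+2κ} and with x_i on A_i^{+2κ} for each i ∈ I, and it belongs to X. -/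
open Filter Set

namespace GoE

variable {G M Q : Type*}

variable [Group G]

namespace CellSpace

variable (R : CellSpace G M) (S : Set G)

lemma act_inv (h : G) (m : M) : R.act h⁻¹ (R.act h m) = m := by
  rw [← R.mul_act, inv_mul_cancel, R.one_act]

lemma chain_refl (m : M) : R.Chain S m m 0 :=
  ⟨fun _ => m, rfl, rfl, fun i hi => absurd hi (Nat.not_lt_zero i)⟩

lemma chain_snoc {m m' : M} {n : ℕ} (h : R.Chain S m m' n) {s : G} (hs : s ∈ S) :
    R.Chain S m (R.sAct m' s) (n + 1) := by
  obtain ⟨f, hf0, hfn, hf⟩ := h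
  refine ⟨fun i => if i ≤ n then f i else R.sAct m' s, by simp [hf0], by simp, ?_⟩
  intro i hi
  rcases Nat.lt_or_ge i n with h1 | h1
  · obtain ⟨t, ht, hstep⟩ := hf i h1
    have e1 : i + 1 ≤ n := h1
    have e2 : i ≤ n := Nat.le_of_lt h1
    exact ⟨t, ht, by simp [e1, e2, hstep]⟩
  · have : i = n := by omega
    subst this
    exact ⟨s, hs, by simp [hfn]⟩

lemma chain_trans {m m' m'' : M} {n k : ℕ} (h1 : R.Chain S m m' n)
    (h2 : R.Chain S m' m'' k) : R.Chain S m m'' (n + k) := by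
  induction k generalizing m'' with
  | zero =>
    obtain ⟨g, hg0, hgk, _⟩ := h2
    rw [← hgk, hg0]; exact h1
  | succ k ih =>
    obtain ⟨g, hg0, hgk, hg⟩ := h2
    obtain ⟨s, hs, hstep⟩ := hg k (Nat.lt_succ_self k)
    have hc : R.Chain S m' (g k) k := ⟨g, hg0, rfl, fun i hi => hg i (by omega)⟩
    have := R.chain_snoc S (ih hc) hs
    rw [← hstep, hgk] at this
    exact this

lemma act_coord_inv (m : M) : R.act (R.coord m)⁻¹ m = R.m0 := by
  have := R.act_inv (R.coord m) R.m0
  rwa [R.coord_act] at this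

lemma step_symm (hS : R.IsRightGenSet S) {s : G} (hs : s ∈ S) (m : M) :
    ∃ s' ∈ S, R.sAct (R.sAct m s) s' = m := by
  set m' := R.sAct m s with hm'
  have hg0 : R.stab ((R.coord m')⁻¹ * (R.coord m * s)) := by
    show R.act _ _ = _
    rw [R.mul_act]
    have h1 : R.act (R.coord m * s) R.m0 = m' := rfl
    rw [h1, R.act_coord_inv]
  refine ⟨(R.coord m')⁻¹ * (R.coord m * s) * s⁻¹,
    hS.stab_mul _ hg0 s⁻¹ (hS.symm s hs), ?_⟩
  show R.act (R.coord m' * ((R.coord m')⁻¹ * (R.coord m * s) * s⁻¹)) R.m0 = m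
  have : R.coord m' * ((R.coord m')⁻¹ * (R.coord m * s) * s⁻¹) = R.coord m := by
    group
  rw [this, R.coord_act]

lemma chain_symm (hS : R.IsRightGenSet S) {m m' : M} {n : ℕ}
    (h : R.Chain S m m' n) : R.Chain S m' m n := by
  induction n generalizing m' with
  | zero =>
    obtain ⟨g, hg0, hgk, _⟩ := h
    rw [← hgk, hg0]; exact R.chain_refl S m
  | succ n ih =>
    obtain ⟨g, hg0, hgk, hg⟩ := h
    obtain ⟨s, hs, hstep⟩ := hg n (Nat.lt_succ_self n)
    have hc : R.Chain S m (g n) n := ⟨g, hg0, rfl, fun i hi => hg i (by omega)⟩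
    obtain ⟨s', hs', hstep'⟩ := R.step_symm S hS hs (g n)
    have h1 : R.Chain S m' (g n) 1 := by
      have := R.chain_snoc S (R.chain_refl S m') hs'
      rw [← hgk, hstep] at this ⊢
      rwa [hstep'] at this
    have := R.chain_trans S h1 (ih hc)
    rwa [Nat.add_comm] at this

lemma chain_exists (hS : R.IsRightGenSet S) (m m' : M) :
    ∃ n, R.Chain S m m' n := by
  obtain ⟨k, f, hf0, hfk, hf⟩ := hS.generates m
  obtain ⟨k', f', hf0', hfk', hf'⟩ := hS.generates m'
  exact ⟨k + k', R.chain_trans S (R.chain_symm S hS ⟨f, hf0, hfk, hf⟩)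
    ⟨f', hf0', hfk', hf'⟩⟩

lemma chain_dist (hS : R.IsRightGenSet S) (m m' : M) :
    R.Chain S m m' (R.dist S m m') :=
  Nat.sInf_mem (R.chain_exists S hS m m')

lemma dist_le_of_chain {m m' : M} {n : ℕ} (h : R.Chain S m m' n) :
    R.dist S m m' ≤ n :=
  Nat.sInf_le h

lemma dist_self (m : M) : R.dist S m m = 0 :=
  Nat.le_zero.mp (R.dist_le_of_chain S (R.chain_refl S m))

lemma dist_triangle (hS : R.IsRightGenSet S) (m m' m'' : M) :
    R.dist S m m'' ≤ R.dist S m m' + R.dist S m' m'' :=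
  R.dist_le_of_chain S
    (R.chain_trans S (R.chain_dist S hS m m') (R.chain_dist S hS m' m''))

lemma dist_symm (hS : R.IsRightGenSet S) (m m' : M) :
    R.dist S m m' = R.dist S m' m :=
  le_antisymm
    (R.dist_le_of_chain S (R.chain_symm S hS (R.chain_dist S hS m' m)))
    (R.dist_le_of_chain S (R.chain_symm S hS (R.chain_dist S hS m m')))

lemma act_sAct (hS : R.IsRightGenSet S) (h : G) (m : M) {s : G} (hs : s ∈ S) :
    ∃ s' ∈ S, R.act h (R.sAct m s) = R.sAct (R.act h m) s' := by
  have hg0 : R.stab ((R.coord (R.act h m))⁻¹ * (h * R.coord m)) := by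
    show R.act _ _ = _
    rw [R.mul_act, R.mul_act, R.coord_act, R.act_coord_inv]
  refine ⟨(R.coord (R.act h m))⁻¹ * (h * R.coord m) * s,
    hS.stab_mul _ hg0 s hs, ?_⟩
  show R.act h (R.act (R.coord m * s) R.m0) =
    R.act (R.coord (R.act h m) * ((R.coord (R.act h m))⁻¹ * (h * R.coord m) * s)) R.m0
  rw [← R.mul_act]
  congr 1
  group

lemma act_chain (hS : R.IsRightGenSet S) (h : G) {m m' : M} {n : ℕ}
    (hc : R.Chain S m m' n) : R.Chain S (R.act h m) (R.act h m') n := by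
  obtain ⟨f, hf0, hfn, hf⟩ := hc
  refine ⟨fun i => R.act h (f i), by simp [hf0], by simp [hfn], ?_⟩
  intro i hi
  obtain ⟨s, hs, hstep⟩ := hf i hi
  obtain ⟨s', hs', hstep'⟩ := R.act_sAct S hS h (f i) hs
  refine ⟨s', hs', ?_⟩
  show R.act h (f (i + 1)) = R.sAct (R.act h (f i)) s'
  rw [hstep]; exact hstep'

lemma dist_act_le (hS : R.IsRightGenSet S) (h : G) (m m' : M) :
    R.dist S (R.act h m) (R.act h m') ≤ R.dist S m m' :=
  R.dist_le_of_chain S (R.act_chain S hS h (R.chain_dist S hS m m'))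

lemma subset_clos (A : Set M) (θ : ℕ) : A ⊆ R.clos S A θ := by
  intro m hm
  exact ⟨m, by simp [ball, R.dist_self S m], hm⟩

end CellSpace

theorem stmt4 {ι : Type*}
    [Finite Q] (R : CellSpace G M) (S : Set G) (hS : R.IsRightGenSet S)
    (H : Subgroup G) (hH : ∀ m : M, R.coord m ∈ H)
    (X : Set (M → Q)) (κ : ℕ) (hX : IsSubshift R H X) (hstep : IsStep R S H X κ)
    (x : M → Q) (hx : x ∈ X)
    (A : ι → Set M)
    (hdisj : ∀ i j : ι, i ≠ j →
      Disjoint (R.clos S (A i) (2 * κ)) (R.clos S (A j) (2 * κ)))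
    (xi : ι → (M → Q)) (hxi : ∀ i, xi i ∈ X)
    (hagree : ∀ i, ∀ m ∈ R.extB S (A i) (2 * κ), xi i m = x m)
    (y y' : M → Q)
    (hy1 : ∀ m : M, m ∉ ⋃ i, A i → y m = x m)
    (hy2 : ∀ i, ∀ m ∈ A i, y m = xi i m)
    (hy1' : ∀ m : M, m ∉ ⋃ i, R.clos S (A i) (2 * κ) → y' m = x m)
    (hy2' : ∀ i, ∀ m ∈ R.clos S (A i) (2 * κ), y' m = xi i m) :
    y = y' ∧ y ∈ X := by
  classical
  have hAclos : ∀ (i : ι) (m : M), m ∈ A i → m ∈ R.clos S (A i) (2 * κ) :=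
    fun i m hm => R.subset_clos S (A i) (2 * κ) hm
  -- key claim: y agrees with xi i on clos (A i) (2κ)
  have key : ∀ (i : ι) (m : M), m ∈ R.clos S (A i) (2 * κ) → y m = xi i m := by
    intro i m hm
    by_cases hmem : m ∈ ⋃ j, A j
    · rcases mem_iUnion.mp hmem with ⟨j, hj⟩
      have hij : j = i := by
        by_contra hne
        exact Set.disjoint_left.mp (hdisj i j (fun e => hne e.symm)) hm
          (hAclos j m hj)
      subst hij
      exact hy2 j m hj
    · have h2 : m ∉ A i := fun h => hmem (mem_iUnion.mpr ⟨i, h⟩)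
      rw [hy1 m hmem, hagree i m ⟨hm, h2⟩]
  have hyy' : y = y' := by
    funext m
    by_cases hm : m ∈ ⋃ j, R.clos S (A j) (2 * κ)
    · rcases mem_iUnion.mp hm with ⟨i, hi⟩
      rw [key i m hi, hy2' i m hi]
    · have h2 : m ∉ ⋃ j, A j := by
        intro hmm
        rcases mem_iUnion.mp hmm with ⟨j, hj⟩
        exact hm (mem_iUnion.mpr ⟨j, hAclos j m hj⟩)
      rw [hy1 m h2, hy1' m hm]
  refine ⟨hyy', ?_⟩
  obtain ⟨𝔉, hdom, hXeq⟩ := hstep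
  rw [hXeq]
  intro f hf hocc
  obtain ⟨h, hhH, hmatch⟩ := hocc
  have hball : ∀ a : (f.1 : Set M), R.dist S R.m0 (a : M) ≤ κ := by
    intro a
    have hb : (a : M) ∈ R.ball S R.m0 κ := by
      rw [← hdom f hf]; exact a.2
    exact hb
  by_cases hcase : ∃ (i : ι) (a : (f.1 : Set M)), R.act h (a : M) ∈ A i
  · obtain ⟨i, a₀, ha₀⟩ := hcase
    have hocc' : SemiOccurs R H f.2 (xi i) := by
      refine ⟨h, hhH, fun a => ?_⟩
      have hd : R.act h (a : M) ∈ R.clos S (A i) (2 * κ) := by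
        refine ⟨R.act h (a₀ : M), ?_, ha₀⟩
        have h1 : R.dist S (R.act h (a : M)) (R.act h (a₀ : M)) ≤
            R.dist S (a : M) (a₀ : M) := R.dist_act_le S hS h _ _
        have h2 : R.dist S (a : M) (a₀ : M) ≤
            R.dist S (a : M) R.m0 + R.dist S R.m0 (a₀ : M) :=
          R.dist_triangle S hS _ _ _
        have h3 : R.dist S (a : M) R.m0 = R.dist S R.m0 (a : M) :=
          R.dist_symm S hS _ _
        have h4 := hball a
        have h5 := hball a₀
        show R.dist S (R.act h (a : M)) (R.act h (a₀ : M)) ≤ 2 * κ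
        omega
      rw [← key i _ hd]
      exact hmatch a
    have hgen : xi i ∈ Generated R H 𝔉 := by rw [← hXeq]; exact hxi i
    exact hgen f hf hocc'
  · push_neg at hcase
    have hocc' : SemiOccurs R H f.2 x := by
      refine ⟨h, hhH, fun a => ?_⟩
      have hnot : R.act h (a : M) ∉ ⋃ j, A j := by
        intro hmm
        rcases mem_iUnion.mp hmm with ⟨j, hj⟩
        exact hcase j a hj
      rw [← hy1 _ hnot]
      exact hmatch a
    have hgen : x ∈ Generated R H 𝔉 := by rw [← hXeq]; exact hx
    exact hgen f hf hocc'

end GoE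
end
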